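/- arXiv:1509.06831 — 2 statements merged into one kernel-verified Lean document; each statement's English description precedes it below -/
import Mathlib

section
/- (Niederreiter's formula for the one-dimensional star discrepancy.) Let x_1, …, x_n ∈ [0,1] and let x_(1) ≤ x_(2) ≤ … ≤ x_(n) be the points arranged in nondecreasing order. Then D*_n(x_1, …, x_n) = 1/(2n) + max_{1 ≤ i ≤ n} | x_(i) − (2i − 1)/(2n) |. -/
/-!
After sorting, `#{i | y i < a} > j` exactly when `y j < a`. So for `a` just above `y i` the
discrepancy function `#{i | y i < a} / n - a` comes arbitrarily close to `(i + 1)/n - y i`, and at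
`a = y i` it is at most `i/n - y i`; these two values are `1/(2n) ± (y i - (2i + 1)/(2n))`.
Conversely, any `a` lies between two consecutive sorted points, which yields the same two bounds
for `|#{i | y i < a} / n - a|`.
-/

noncomputable section

/-- One-dimensional star discrepancy of a finite family of points in `[0,1]`. -/
def starDisc1 {ι : Type*} [Fintype ι] (y : ι → ℝ) : ℝ :=
  sSup {v : ℝ | ∃ a : ℝ, a ∈ Set.Icc (0 : ℝ) 1 ∧
    v = |((Finset.univ.filter fun i : ι => y i < a).card : ℝ) / (Fintype.card ι : ℝ) - a|}

end

open Finset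

theorem starDisc1_comp_equiv {ι κ : Type*} [Fintype ι] [Fintype κ] (x : κ → ℝ) (σ : ι ≃ κ) :
    starDisc1 (x ∘ σ) = starDisc1 x := by
  have hcard : ∀ a, #{i | x (σ i) < a} = #{k | x k < a} := fun a => by
    simp only [card_filter]
    exact Equiv.sum_comp σ fun k => if x k < a then 1 else 0
  simp only [starDisc1, Function.comp, hcard, Fintype.card_congr σ]

section Bounds

variable {ι : Type*} [Fintype ι] (y : ι → ℝ)

theorem abs_card_filter_lt_div_sub_le_starDisc1 {a : ℝ} (ha : a ∈ Set.Icc (0 : ℝ) 1) :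
    |(#{i | y i < a} : ℝ) / Fintype.card ι - a| ≤ starDisc1 y := by
  refine le_csSup ⟨1, ?_⟩ ⟨a, ha, rfl⟩
  rintro v ⟨b, hb, rfl⟩
  have h0 : 0 ≤ (#{i | y i < b} : ℝ) / Fintype.card ι := by positivity
  have h1 : (#{i | y i < b} : ℝ) / Fintype.card ι ≤ 1 :=
    div_le_one_of_le₀ (by exact_mod_cast (card_filter_le _ _).trans_eq card_univ) (by positivity)
  rw [abs_le]
  constructor <;> linarith [hb.1, hb.2]

theorem starDisc1_nonneg : 0 ≤ starDisc1 y :=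
  (abs_nonneg _).trans (abs_card_filter_lt_div_sub_le_starDisc1 y (a := 0) ⟨le_rfl, zero_le_one⟩)

theorem starDisc1_le {M : ℝ}
    (h : ∀ a ∈ Set.Icc (0 : ℝ) 1, |(#{i | y i < a} : ℝ) / Fintype.card ι - a| ≤ M) :
    starDisc1 y ≤ M :=
  csSup_le ⟨_, 0, ⟨le_rfl, zero_le_one⟩, rfl⟩ (by rintro v ⟨a, ha, rfl⟩; exact h a ha)

end Bounds

theorem Monotone.lt_card_filter_lt_iff {α : Type*} [LinearOrder α] {n : ℕ} {y : Fin n → α}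
    (hy : Monotone y) (j : Fin n) (a : α) : (j : ℕ) < #{i | y i < a} ↔ y j < a := by
  constructor
  · intro hj
    by_contra! h
    have hsub : #{i | y i < a} ≤ #(Iio j) := card_le_card fun i hi => by
      simp only [mem_filter, mem_univ, true_and] at hi
      exact mem_Iio.2 (lt_of_not_ge fun hji => (hi.trans_le h).not_ge (hy hji))
    rw [Fin.card_Iio] at hsub
    omega
  · intro hj
    have hsub : #(Iic j) ≤ #{i | y i < a} := card_le_card fun i hi => by
      simp only [mem_filter, mem_univ, true_and]
      exact (hy (mem_Iic.1 hi)).trans_lt hj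
    rw [Fin.card_Iic] at hsub
    omega

section Sorted

variable {n : ℕ} {y : Fin n → ℝ}

theorem abs_card_filter_lt_div_sub_le_of_monotone (hn : 0 < n) (hy : Monotone y) {B : ℝ}
    (hB : ∀ j : Fin n, |y j - (2 * j + 1) / (2 * n)| ≤ B) {a : ℝ} (ha : a ∈ Set.Icc (0 : ℝ) 1) :
    |(#{i | y i < a} : ℝ) / n - a| ≤ 1 / (2 * n) + B := by
  have hnR : (0 : ℝ) < n := by exact_mod_cast hn
  have hB0 : 0 ≤ B := (abs_nonneg _).trans (hB ⟨0, hn⟩)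
  have hhalf : 0 < 1 / (2 * (n : ℝ)) := by positivity
  set N := #{i | y i < a}
  have hNn : N ≤ n := (card_filter_le _ _).trans_eq (card_fin n)
  rw [abs_sub_le_iff]
  constructor
  · rcases Nat.eq_zero_or_pos N with h0 | hpos
    · rw [h0, Nat.cast_zero, zero_div]
      linarith [ha.1]
    · let j : Fin n := ⟨N - 1, by omega⟩
      have hja : y j < a := (hy.lt_card_filter_lt_iff j a).1 (by simp only [j]; omega)
      have hj : ((j : ℕ) : ℝ) = N - 1 := by simp only [j]; push_cast [Nat.cast_sub hpos]; ring
      have hBj := (abs_le.1 (hB j)).1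
      have e : (N : ℝ) / n = (2 * ((N : ℝ) - 1) + 1) / (2 * n) + 1 / (2 * n) := by
        field_simp; ring
      rw [hj] at hBj
      linarith
  · rcases hNn.lt_or_eq with hlt | heq
    · let j : Fin n := ⟨N, hlt⟩
      have hja : a ≤ y j := not_lt.1 fun h => lt_irrefl N ((hy.lt_card_filter_lt_iff j a).2 h)
      have hBj := (abs_le.1 (hB j)).2
      have e : (N : ℝ) / n = (2 * (N : ℝ) + 1) / (2 * n) - 1 / (2 * n) := by field_simp; ring
      linarith
    · rw [heq, div_self hnR.ne']
      linarith [ha.2]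

variable (hy : Monotone y) (hy01 : ∀ i, y i ∈ Set.Icc (0 : ℝ) 1)
include hy hy01

theorem sub_div_le_starDisc1_of_monotone (i : Fin n) : y i - i / n ≤ starDisc1 y := by
  have hN : #{j | y j < y i} ≤ (i : ℕ) :=
    not_lt.1 fun h => lt_irrefl _ ((hy.lt_card_filter_lt_iff i _).1 h)
  have hD := abs_card_filter_lt_div_sub_le_starDisc1 y (hy01 i)
  rw [Fintype.card_fin] at hD
  have hle : (#{j | y j < y i} : ℝ) / n ≤ i / n := by gcongr
  linarith [neg_abs_le ((#{j | y j < y i} : ℝ) / n - y i)]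

theorem succ_div_sub_le_starDisc1_of_monotone (i : Fin n) :
    ((i : ℝ) + 1) / n - y i ≤ starDisc1 y := by
  rcases lt_or_ge (y i) 1 with hlt | hge
  · refine le_of_forall_pos_le_add fun ε hε => ?_
    set a := min (y i + ε) 1
    have ha : a ∈ Set.Icc (0 : ℝ) 1 :=
      ⟨le_min (by linarith [(hy01 i).1]) zero_le_one, min_le_right _ _⟩
    have hN : (i : ℕ) < #{j | y j < a} := (hy.lt_card_filter_lt_iff i a).2 (lt_min (by linarith) hlt)
    have hD := abs_card_filter_lt_div_sub_le_starDisc1 y ha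
    rw [Fintype.card_fin] at hD
    have hle : ((i : ℝ) + 1) / n ≤ (#{j | y j < a} : ℝ) / n := by gcongr; exact_mod_cast hN
    linarith [le_abs_self ((#{j | y j < a} : ℝ) / n - a), min_le_left (y i + ε) 1]
  · have : ((i : ℝ) + 1) / n ≤ 1 := div_le_one_of_le₀ (by exact_mod_cast i.isLt) (by positivity)
    linarith [starDisc1_nonneg y]

theorem one_div_two_mul_add_abs_le_starDisc1_of_monotone (i : Fin n) :
    1 / (2 * n) + |y i - (2 * i + 1) / (2 * n)| ≤ starDisc1 y := by
  have hn : (n : ℝ) ≠ 0 := by exact_mod_cast i.pos.ne'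
  have h₁ := sub_div_le_starDisc1_of_monotone hy hy01 i
  have h₂ := succ_div_sub_le_starDisc1_of_monotone hy hy01 i
  have e₁ : (i : ℝ) / n = (2 * i + 1) / (2 * n) - 1 / (2 * n) := by field_simp; ring
  have e₂ : ((i : ℝ) + 1) / n = (2 * i + 1) / (2 * n) + 1 / (2 * n) := by field_simp; ring
  rw [← le_sub_iff_add_le', abs_sub_le_iff]
  constructor <;> linarith

end Sorted

/-- **Niederreiter's formula** for the one-dimensional star discrepancy: if
`x (σ 0) ≤ x (σ 1) ≤ … ≤ x (σ (n-1))` is the nondecreasing rearrangement of the points,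
then `D*_n = 1/(2n) + max_i |x_(i) − (2i − 1)/(2n)|` (with `i` running from `1` to `n`). -/
theorem starDisc1_formula {n : ℕ} (hn : 0 < n) (x : Fin n → ℝ)
    (hx : ∀ i, x i ∈ Set.Icc (0 : ℝ) 1)
    (σ : Equiv.Perm (Fin n)) (hσ : Monotone (x ∘ σ)) :
    starDisc1 x = 1 / (2 * n) +
      Finset.univ.sup' (Finset.univ_nonempty_iff.mpr ⟨⟨0, hn⟩⟩)
        (fun i : Fin n => |x (σ i) - (2 * (i : ℝ) + 1) / (2 * n)|) := by
  rw [← starDisc1_comp_equiv x σ]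
  have hx' : ∀ i, (x ∘ σ) i ∈ Set.Icc (0 : ℝ) 1 := fun i => hx (σ i)
  refine le_antisymm (starDisc1_le _ fun a ha => ?_) ?_
  · rw [Fintype.card_fin]
    exact abs_card_filter_lt_div_sub_le_of_monotone hn hσ (fun j => le_sup' (fun i => |x (σ i) - (2 * (i : ℝ) + 1) / (2 * n)|) (mem_univ j)) ha
  · rw [← le_sub_iff_add_le']
    exact sup'_le _ _ fun i _ =>
      le_sub_iff_add_le'.2 (one_div_two_mul_add_abs_le_starDisc1_of_monotone hσ hx' i)
end

section
/- (Warnock's formula.) For any points x_1, …, x_n ∈ [0,1]^d, the squared L2 star discrepancy satisfies [D_n^{(2)}(x_1, …, x_n)]^2 = 1/3^d − (2^{1−d}/n)·∑_{i=1}^n ∏_{k=1}^d (1 − x_{ik}^2) + (1/n^2)·∑_{i=1}^n ∑_{j=1}^n ∏_{k=1}^d min{1 − x_{ik}, 1 − x_{jk}}. -/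
/-!
The number of points in the anchored box `[0, a)` is `∑ᵢ ∏ₖ 1{xᵢₖ < aₖ}`, so after expanding the
square every term of the integrand is a sum of functions of product form `∏ₖ gₖ(aₖ)`, whose
integral over the unit cube factors (Fubini) into one-dimensional integrals:
`∫₀¹ 1{t > max(x, y)} dt = min(1 - x, 1 - y)`, `∫₀¹ t · 1{t > x} dt = (1 - x²)/2` and
`∫₀¹ t² dt = 1/3`.
-/

open MeasureTheory

noncomputable section

/-- `L²` star discrepancy of a finite family of points in `[0,1]^d`. -/
def l2StarDisc {ι : Type*} [Fintype ι] {d : ℕ} (x : ι → Fin d → ℝ) : ℝ :=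
  Real.sqrt (∫ a in Set.Icc (0 : Fin d → ℝ) 1,
    (((Finset.univ.filter fun i : ι => ∀ k, x i k < a k).card : ℝ) / (Fintype.card ι : ℝ)
      - ∏ k, a k) ^ 2)

end

open Set

section Box

variable {ι : Type*} [Fintype ι] {l u : ι → ℝ}

theorem volume_restrict_Icc_pi :
    (volume : Measure (ι → ℝ)).restrict (Icc l u)
      = Measure.pi fun k => volume.restrict (Icc (l k) (u k)) := by
  rw [← pi_univ_Icc, volume_pi, Measure.restrict_pi_pi]

theorem integrableOn_Icc_pi_prod {f : ι → ℝ → ℝ}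
    (hf : ∀ k, IntegrableOn (f k) (Icc (l k) (u k))) :
    IntegrableOn (fun a => ∏ k, f k (a k)) (Icc l u) := by
  rw [IntegrableOn, volume_restrict_Icc_pi]
  exact Integrable.fintype_prod hf

theorem setIntegral_Icc_pi_prod (f : ι → ℝ → ℝ) :
    ∫ a in Icc l u, ∏ k, f k (a k) = ∏ k, ∫ t in Icc (l k) (u k), f k t := by
  rw [volume_restrict_Icc_pi, integral_fintype_prod_eq_prod]

end Box

theorem setIntegral_Icc_indicator_Ioi {a b c : ℝ} (hc : c ∈ Icc a b) (g : ℝ → ℝ) :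
    ∫ t in Icc a b, (Ioi c).indicator g t = ∫ t in c..b, g t := by
  have hIoc : Ioi c ∩ Icc a b = Ioc c b := by
    ext t
    simp only [mem_inter_iff, mem_Ioi, mem_Icc, mem_Ioc]
    exact ⟨fun h => ⟨h.1, h.2.2⟩, fun h => ⟨h.1, hc.1.trans h.1.le, h.2⟩⟩
  rw [integral_indicator measurableSet_Ioi, Measure.restrict_restrict measurableSet_Ioi, hIoc,
    intervalIntegral.integral_of_le hc.2]

section UnitCube

variable {ι : Type*} [Fintype ι]

theorem setIntegral_unitCube_prod_indicator_Ioi_max {y z : ι → ℝ} (hy : y ∈ Icc 0 1)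
    (hz : z ∈ Icc 0 1) :
    ∫ a in Icc (0 : ι → ℝ) 1, ∏ k, (Ioi (max (y k) (z k))).indicator 1 (a k)
      = ∏ k, min (1 - y k) (1 - z k) := by
  rw [setIntegral_Icc_pi_prod]
  refine Finset.prod_congr rfl fun k _ => ?_
  have hk : max (y k) (z k) ∈ Icc (0 : ℝ) 1 :=
    ⟨le_max_of_le_left (hy.1 k), max_le (hy.2 k) (hz.2 k)⟩
  simp [setIntegral_Icc_indicator_Ioi hk, min_sub_sub_left]

theorem setIntegral_unitCube_prod_indicator_Ioi_id {y : ι → ℝ} (hy : y ∈ Icc 0 1) :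
    ∫ a in Icc (0 : ι → ℝ) 1, ∏ k, (Ioi (y k)).indicator id (a k)
      = (∏ k, (1 - y k ^ 2)) / 2 ^ Fintype.card ι := by
  rw [setIntegral_Icc_pi_prod, ← Finset.card_univ, ← Finset.prod_const, ← Finset.prod_div_distrib]
  refine Finset.prod_congr rfl fun k _ => ?_
  rw [setIntegral_Icc_indicator_Ioi ⟨hy.1 k, hy.2 k⟩, Pi.one_apply]
  simp only [id_eq, integral_id]
  ring

theorem setIntegral_unitCube_prod_sq :
    ∫ a in Icc (0 : ι → ℝ) 1, ∏ k, a k ^ 2 = 1 / 3 ^ Fintype.card ι := by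
  rw [setIntegral_Icc_pi_prod (fun _ t => t ^ 2), one_div, ← inv_pow, ← Finset.card_univ,
    ← Finset.prod_const]
  refine Finset.prod_congr rfl fun k _ => ?_
  rw [Pi.zero_apply, Pi.one_apply, integral_Icc_eq_integral_Ioc,
    ← intervalIntegral.integral_of_le zero_le_one, integral_pow]
  norm_num

theorem integrableOn_unitCube_prod_indicator_Ioi_one (c : ι → ℝ) :
    IntegrableOn (fun a => ∏ k, (Ioi (c k)).indicator (1 : ℝ → ℝ) (a k)) (Icc (0 : ι → ℝ) 1) :=
  integrableOn_Icc_pi_prod fun _ => continuous_const.integrableOn_Icc.indicator measurableSet_Ioi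

theorem integrableOn_unitCube_prod_indicator_Ioi_id (c : ι → ℝ) :
    IntegrableOn (fun a => ∏ k, (Ioi (c k)).indicator id (a k)) (Icc (0 : ι → ℝ) 1) :=
  integrableOn_Icc_pi_prod fun _ => continuous_id.integrableOn_Icc.indicator measurableSet_Ioi

variable {α : Type*} [Fintype α] {x : α → ι → ℝ}

theorem setIntegral_unitCube_sum_sum_prod_indicator_Ioi_max (hx : ∀ i, x i ∈ Icc 0 1) :
    ∫ a in Icc (0 : ι → ℝ) 1, ∑ i, ∑ j, ∏ k, (Ioi (max (x i k) (x j k))).indicator 1 (a k)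
      = ∑ i, ∑ j, ∏ k, min (1 - x i k) (1 - x j k) := by
  rw [integral_finsetSum _ fun i _ => integrable_finsetSum _ fun j _ =>
    integrableOn_unitCube_prod_indicator_Ioi_one _]
  refine Finset.sum_congr rfl fun i _ => ?_
  rw [integral_finsetSum _ fun j _ => integrableOn_unitCube_prod_indicator_Ioi_one _]
  exact Finset.sum_congr rfl fun j _ => setIntegral_unitCube_prod_indicator_Ioi_max (hx i) (hx j)

theorem setIntegral_unitCube_sum_prod_indicator_Ioi_id (hx : ∀ i, x i ∈ Icc 0 1) :
    ∫ a in Icc (0 : ι → ℝ) 1, ∑ i, ∏ k, (Ioi (x i k)).indicator id (a k)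
      = (∑ i, ∏ k, (1 - x i k ^ 2)) / 2 ^ Fintype.card ι := by
  rw [integral_finsetSum _ fun i _ => integrableOn_unitCube_prod_indicator_Ioi_id _,
    Finset.sum_div]
  exact Finset.sum_congr rfl fun i _ => setIntegral_unitCube_prod_indicator_Ioi_id (hx i)

end UnitCube

section Expansion

variable {ι κ : Type*} [Fintype ι] [Fintype κ]

theorem card_filter_forall_lt_eq_sum_prod_indicator (x : ι → κ → ℝ) (a : κ → ℝ)
    [DecidablePred fun i => ∀ k, x i k < a k] :
    ((Finset.univ.filter fun i => ∀ k, x i k < a k).card : ℝ)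
      = ∑ i, ∏ k, (Ioi (x i k)).indicator 1 (a k) := by
  rw [Finset.natCast_card_filter]
  refine Finset.sum_congr rfl fun i _ => ?_
  simp [Finset.prod_boole, indicator_apply]

theorem sq_sum_prod_indicator_div_sub_prod (x : ι → κ → ℝ) (a : κ → ℝ) (m : ℝ) :
    ((∑ i, ∏ k, (Ioi (x i k)).indicator 1 (a k)) / m - ∏ k, a k) ^ 2
      = 1 / m ^ 2 * ∑ i, ∑ j, ∏ k, (Ioi (max (x i k) (x j k))).indicator 1 (a k)
        - 2 / m * ∑ i, ∏ k, (Ioi (x i k)).indicator id (a k)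
        + ∏ k, a k ^ 2 := by
  have hcount : (∑ i, ∏ k, (Ioi (x i k)).indicator (1 : ℝ → ℝ) (a k)) ^ 2
      = ∑ i, ∑ j, ∏ k, (Ioi (max (x i k) (x j k))).indicator 1 (a k) := by
    simp_rw [sq, Finset.sum_mul_sum, ← Finset.prod_mul_distrib, ← Ioi_inter_Ioi,
      inter_indicator_one, Pi.mul_apply]
  have hcross : (∑ i, ∏ k, (Ioi (x i k)).indicator (1 : ℝ → ℝ) (a k)) * ∏ k, a k
      = ∑ i, ∏ k, (Ioi (x i k)).indicator id (a k) := by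
    simp_rw [Finset.sum_mul, ← Finset.prod_mul_distrib, indicator_apply, Pi.one_apply, id,
      ite_mul, one_mul, zero_mul]
  rw [← hcount, ← hcross, Finset.prod_pow]
  ring

end Expansion

theorem warnock_formula_general {d n : ℕ} (x : Fin n → Fin d → ℝ)
    (hx : ∀ i, x i ∈ Set.Icc (0 : Fin d → ℝ) 1) :
    (l2StarDisc x) ^ 2
      = 1 / 3 ^ d
        - (2 : ℝ) ^ ((1 : ℤ) - d) / n * ∑ i, ∏ k, (1 - x i k ^ 2)
        + 1 / (n : ℝ) ^ 2 * ∑ i, ∑ j, ∏ k, min (1 - x i k) (1 - x j k) := by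
  have hpairs := integrable_finsetSum Finset.univ fun i _ => integrable_finsetSum Finset.univ
    fun j _ => integrableOn_unitCube_prod_indicator_Ioi_one fun k => max (x i k) (x j k)
  have hpoints := integrable_finsetSum Finset.univ fun i _ =>
    integrableOn_unitCube_prod_indicator_Ioi_id (x i)
  have hvolume := integrableOn_Icc_pi_prod (l := (0 : Fin d → ℝ)) (u := 1)
    (f := fun _ t => t ^ 2) fun _ => (continuous_pow 2).integrableOn_Icc
  rw [l2StarDisc, Real.sq_sqrt (integral_nonneg fun _ => sq_nonneg _)]
  simp_rw [card_filter_forall_lt_eq_sum_prod_indicator, sq_sum_prod_indicator_div_sub_prod]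
  rw [integral_add ?_ hvolume, integral_sub (hpairs.const_mul _) (hpoints.const_mul _),
    integral_const_mul, integral_const_mul, setIntegral_unitCube_sum_sum_prod_indicator_Ioi_max hx,
    setIntegral_unitCube_sum_prod_indicator_Ioi_id hx, setIntegral_unitCube_prod_sq]
  · rw [Fintype.card_fin, Fintype.card_fin, zpow_sub₀ two_ne_zero, zpow_one, zpow_natCast]
    ring
  · exact (hpairs.const_mul _).sub (hpoints.const_mul _)

/-- **Warnock's formula** for the squared `L²` star discrepancy. -/
theorem warnock_formula {d n : ℕ} (hn : 0 < n) (x : Fin n → Fin d → ℝ)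
    (hx : ∀ i, x i ∈ Set.Icc (0 : Fin d → ℝ) 1) :
    (l2StarDisc x) ^ 2
      = 1 / 3 ^ d
        - (2 : ℝ) ^ ((1 : ℤ) - d) / n * ∑ i, ∏ k, (1 - x i k ^ 2)
        + 1 / (n : ℝ) ^ 2 * ∑ i, ∑ j, ∏ k, min (1 - x i k) (1 - x j k) :=
  warnock_formula_general x hx
end
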